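/- arXiv:1011.0027 — 4 statements merged into one kernel-verified Lean document; each statement's English description precedes it below -/
import Mathlib

section
/- The function f(I,x) defined on {(I,x) : I ≥ 0, x ≥ 0} by f(I,x) = -I·U((1 - a·e^{-b·x·γ/I})·r) for I > 0 and f(I,x) = 0 for I = 0 is jointly convex in (I,x), where a ∈ (0,1], b > 0, r > 0, γ > 0 are constants and U : ℝ → ℝ is twice differentiable, concave, and nondecreasing. -/
/-!
Write `f(I, x) = I · g(x / I)` with `g t = -U((1 - a e^{-bγt}) r)`, i.e. `f` is the perspective
of `g`. The map `t ↦ (1 - a e^{-bγt}) r` is concave and nondecreasing, and `U` is concave and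
nondecreasing, so `g` is convex and nonincreasing. The perspective of a convex function is
jointly convex on `I > 0`. On the boundary `I = 0` the value `0` is compatible with convexity
because `g` is nonincreasing: mixing in a point `(0, x)` only increases the ratio `x / I`.
-/

open Set Real

noncomputable def perspective (g : ℝ → ℝ) (p : ℝ × ℝ) : ℝ :=
  if p.1 = 0 then 0 else p.1 * g (p.2 / p.1)

section Perspective

variable {g : ℝ → ℝ}

lemma perspective_zero_fst (x : ℝ) : perspective g (0, x) = 0 := if_pos rfl

lemma perspective_of_fst_ne_zero {p : ℝ × ℝ} (hp : p.1 ≠ 0) :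
    perspective g p = p.1 * g (p.2 / p.1) := if_neg hp

lemma perspective_smul {c : ℝ} (hc : 0 ≤ c) (p : ℝ × ℝ) :
    perspective g (c • p) = c * perspective g p := by
  rcases hc.eq_or_lt with rfl | hc
  · simp [perspective]
  by_cases hp : p.1 = 0
  · simp [perspective, hp]
  rw [perspective_of_fst_ne_zero hp, perspective_of_fst_ne_zero (by simp [hc.ne', hp])]
  simp only [Prod.smul_fst, Prod.smul_snd, smul_eq_mul, mul_div_mul_left _ _ hc.ne']
  ring

lemma perspective_antitone_snd (hg : AntitoneOn g (Ici 0)) {I x y : ℝ} (hI : 0 ≤ I)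
    (hx : 0 ≤ x) (hxy : x ≤ y) : perspective g (I, y) ≤ perspective g (I, x) := by
  rcases hI.eq_or_lt with rfl | hI
  · simp [perspective_zero_fst]
  rw [perspective_of_fst_ne_zero hI.ne', perspective_of_fst_ne_zero hI.ne']
  exact mul_le_mul_of_nonneg_left (hg (div_nonneg hx hI.le)
    (div_nonneg (hx.trans hxy) hI.le) (div_le_div_of_nonneg_right hxy hI.le)) hI.le

lemma perspective_add_le_of_fst_eq_zero (hg : AntitoneOn g (Ici 0)) {p q : ℝ × ℝ}
    (hp : p.1 = 0) (hp₂ : 0 ≤ p.2) (hq : 0 ≤ q) {s t : ℝ} (hs : 0 ≤ s) (ht : 0 ≤ t) :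
    perspective g (s • p + t • q) ≤ s * perspective g p + t * perspective g q := by
  obtain ⟨I, x⟩ := p
  obtain rfl : I = 0 := hp
  calc perspective g (s • (0, x) + t • q) = perspective g (t * q.1, s * x + t * q.2) := by
        congr 1; ext <;> simp
    _ ≤ perspective g (t * q.1, t * q.2) :=
        perspective_antitone_snd hg (mul_nonneg ht hq.1) (mul_nonneg ht hq.2)
          (le_add_of_nonneg_left (mul_nonneg hs hp₂))
    _ = t * perspective g q := perspective_smul ht q
    _ = s * perspective g (0, x) + t * perspective g q := by simp [perspective_zero_fst]

lemma perspective_add_le_of_fst_pos (hg : ConvexOn ℝ (Ici 0) g) {p q : ℝ × ℝ}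
    (hp₁ : 0 < p.1) (hp₂ : 0 ≤ p.2) (hq₁ : 0 < q.1) (hq₂ : 0 ≤ q.2) {s t : ℝ}
    (hs : 0 ≤ s) (ht : 0 ≤ t) (hst : s + t = 1) :
    perspective g (s • p + t • q) ≤ s * perspective g p + t * perspective g q := by
  have hJpos : 0 < s * p.1 + t * q.1 := by
    rcases hs.eq_or_lt with rfl | hs
    · obtain rfl : t = 1 := by linarith
      simpa using hq₁
    · positivity
  set J := s * p.1 + t * q.1
  have key := hg.2 (div_nonneg hp₂ hp₁.le) (div_nonneg hq₂ hq₁.le)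
    (show 0 ≤ s * p.1 / J by positivity) (show 0 ≤ t * q.1 / J by positivity)
    (by rw [← add_div, div_self hJpos.ne'])
  have hmid : s * p.1 / J * (p.2 / p.1) + t * q.1 / J * (q.2 / q.1) =
      (s * p.2 + t * q.2) / J := by
    field_simp
  simp only [smul_eq_mul, hmid] at key
  rw [perspective_of_fst_ne_zero hp₁.ne', perspective_of_fst_ne_zero hq₁.ne',
    perspective_of_fst_ne_zero (show (s • p + t • q).1 ≠ 0 from hJpos.ne')]
  calc J * g ((s * p.2 + t * q.2) / J)
      ≤ J * (s * p.1 / J * g (p.2 / p.1) + t * q.1 / J * g (q.2 / q.1)) :=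
        mul_le_mul_of_nonneg_left key hJpos.le
    _ = s * (p.1 * g (p.2 / p.1)) + t * (q.1 * g (q.2 / q.1)) := by field_simp

theorem convexOn_perspective (hg : ConvexOn ℝ (Ici 0) g) (hg' : AntitoneOn g (Ici 0)) :
    ConvexOn ℝ {p : ℝ × ℝ | 0 ≤ p.1 ∧ 0 ≤ p.2} (perspective g) := by
  refine ⟨convex_Ici (0 : ℝ × ℝ), fun p hp q hq s t hs ht hst => ?_⟩
  rcases hp.1.eq_or_lt with hp₁ | hp₁
  · exact perspective_add_le_of_fst_eq_zero hg' hp₁.symm hp.2 hq hs ht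
  rcases hq.1.eq_or_lt with hq₁ | hq₁
  · rw [add_comm (s • p), add_comm (s • _)]
    exact perspective_add_le_of_fst_eq_zero hg' hq₁.symm hq.2 hp ht hs
  exact perspective_add_le_of_fst_pos hg hp₁ hp.2 hq₁ hq.2 hs ht hst

end Perspective

lemma ConcaveOn.comp_of_monotone {E : Type*} [AddCommMonoid E] [Module ℝ E] {s : Set E}
    {h : E → ℝ} {U : ℝ → ℝ} (hU : ConcaveOn ℝ univ U) (hU' : Monotone U)
    (hh : ConcaveOn ℝ s h) : ConcaveOn ℝ s (U ∘ h) :=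
  ⟨hh.1, fun _ hx _ hy _ _ ha hb hab =>
    (hU.2 trivial trivial ha hb hab).trans (hU' (hh.2 hx hy ha hb hab))⟩

section Saturation

variable {a c r : ℝ}

lemma concaveOn_one_sub_mul_exp (ha : 0 ≤ a) (hr : 0 ≤ r) :
    ConcaveOn ℝ univ (fun t => (1 - a * exp (-(c * t))) * r) := by
  refine ⟨convex_univ, fun x _ y _ s t hs ht hst => ?_⟩
  have hexp := convexOn_exp.2 (mem_univ (-(c * x))) (mem_univ (-(c * y))) hs ht hst
  simp only [smul_eq_mul] at hexp ⊢
  rw [show s * -(c * x) + t * -(c * y) = -(c * (s * x + t * y)) by ring] at hexp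
  nlinarith [mul_le_mul_of_nonneg_left hexp (mul_nonneg ha hr)]

lemma monotone_one_sub_mul_exp (ha : 0 ≤ a) (hc : 0 ≤ c) (hr : 0 ≤ r) :
    Monotone (fun t => (1 - a * exp (-(c * t))) * r) := fun _ _ hst => by
  dsimp only
  gcongr

end Saturation

theorem stmt0_general (a b r γ : ℝ) (ha : 0 < a) (hb : 0 < b) (hr : 0 < r)
    (hγ : 0 < γ) (U : ℝ → ℝ) (hUdiff : Differentiable ℝ U)
    (hUdiff2 : Differentiable ℝ (deriv U))
    (hU' : ∀ x, 0 ≤ deriv U x) (hU'' : ∀ x, deriv (deriv U) x ≤ 0) :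
    ConvexOn ℝ {p : ℝ × ℝ | 0 ≤ p.1 ∧ 0 ≤ p.2}
      (fun p => if p.1 = 0 then 0
        else -p.1 * U ((1 - a * Real.exp (-b * p.2 * γ / p.1)) * r)) := by
  have hU_concave : ConcaveOn ℝ univ U := concaveOn_univ_of_deriv2_nonpos hUdiff hUdiff2 hU''
  have hU_mono : Monotone U := monotone_of_deriv_nonneg hUdiff hU'
  have hc : 0 ≤ b * γ := by positivity
  have hg_convex : ConvexOn ℝ (Ici 0) (fun t => -U ((1 - a * exp (-(b * γ * t))) * r)) :=
    ((hU_concave.comp_of_monotone hU_mono (concaveOn_one_sub_mul_exp ha.le hr.le)).neg).subset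
      (subset_univ _) (convex_Ici 0)
  have hg_anti : AntitoneOn (fun t => -U ((1 - a * exp (-(b * γ * t))) * r)) (Ici 0) :=
    fun _ _ _ _ hst => neg_le_neg (hU_mono (monotone_one_sub_mul_exp ha.le hc hr.le hst))
  convert convexOn_perspective hg_convex hg_anti using 2 with p
  unfold perspective
  split_ifs
  · rfl
  · rw [show -b * p.2 * γ / p.1 = -(b * γ * (p.2 / p.1)) by ring]
    ring

/-- The perspective-like function `f(I,x) = -I·U((1 - a·e^{-b·x·γ/I})·r)` for `I > 0`,
extended by `0` at `I = 0`, is jointly convex on `{(I,x) : I ≥ 0, x ≥ 0}`. -/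
theorem stmt0 (a b r γ : ℝ) (ha : 0 < a) (ha1 : a ≤ 1) (hb : 0 < b) (hr : 0 < r)
    (hγ : 0 < γ) (U : ℝ → ℝ) (hUdiff : Differentiable ℝ U)
    (hUdiff2 : Differentiable ℝ (deriv U))
    (hU' : ∀ x, 0 ≤ deriv U x) (hU'' : ∀ x, deriv (deriv U) x ≤ 0) :
    ConvexOn ℝ {p : ℝ × ℝ | 0 ≤ p.1 ∧ 0 ≤ p.2}
      (fun p => if p.1 = 0 then 0
        else -p.1 * U ((1 - a * Real.exp (-b * p.2 * γ / p.1)) * r)) :=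
  stmt0_general a b r γ ha hb hr hγ U hUdiff hUdiff2 hU' hU''
end

section
/- Under the assumptions on φ above, for every μ satisfying 0 < μ ≤ φ(0) = a·b·r·U'((1-a)·r)·γ, there exists a unique p ≥ 0 with φ(p) = μ; and for μ > φ(0), no p ≥ 0 satisfies φ(p) = μ. Moreover the solution p(μ) is a continuous, strictly decreasing function of μ on (0, φ(0)]. -/
/-!
`φ` is a positive constant times `U'((1 - a e^{-bpγ}) r) · e^{-bpγ}`. The exponential factor is
positive and strictly decreasing; the first factor is positive and nonincreasing, because
`U'' ≤ 0` makes `U'` antitone while its argument increases with `p`. So `φ` is continuous and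
strictly decreasing from `φ 0` towards its limit `0`: the intermediate value theorem gives a
solution of `φ p = μ` for `0 < μ ≤ φ 0`, strict monotonicity makes it unique and rules out
`μ > φ 0`, and a right inverse of a strictly decreasing map is strictly decreasing and
continuous.
-/

open Set Filter Topology

section Order

variable {α β : Type*} [LinearOrder α] [LinearOrder β] {f : α → β} {g : β → α} {s : Set β}

theorem StrictAnti.strictAntiOn_of_rightInvOn (hf : StrictAnti f) (hg : RightInvOn g f s) :
    StrictAntiOn g s := fun μ hμ ν hν hμν =>
  hf.lt_iff_gt.mp (by rwa [hg hμ, hg hν])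

variable [TopologicalSpace α] [OrderTopology α] [TopologicalSpace β] [OrderTopology β]

/-- No continuity of `f` is needed: the order topology on `α` is generated by the rays, and
`g ν` stays in a ray around `g μ` as soon as `ν` stays on the right side of the `f`-image of
its endpoint. -/
theorem StrictAnti.continuousOn_of_rightInvOn (hf : StrictAnti f) (hg : RightInvOn g f s) :
    ContinuousOn g s := by
  intro μ hμ
  refine tendsto_order.2 ⟨fun p hp => ?_, fun p hp => ?_⟩
  · have hlt : μ < f p := by simpa only [hg hμ] using hf hp
    filter_upwards [nhdsWithin_le_nhds (eventually_lt_nhds hlt), self_mem_nhdsWithin]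
      with ν hν hνs
    exact hf.lt_iff_gt.mp (by rwa [hg hνs])
  · have hlt : f p < μ := by simpa only [hg hμ] using hf hp
    filter_upwards [nhdsWithin_le_nhds (eventually_gt_nhds hlt), self_mem_nhdsWithin]
      with ν hν hνs
    exact hf.lt_iff_gt.mp (by rwa [hg hνs])

end Order

theorem StrictAnti.mul_antitone_of_nonneg_of_pos {α R : Type*} [Preorder α] [Mul R] [Zero R]
    [Preorder R] [PosMulStrictMono R] [MulPosMono R] {f g : α → R} (hf : StrictAnti f)
    (hg : Antitone g) (hf0 : ∀ x, 0 ≤ f x) (hg0 : ∀ x, 0 < g x) :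
    StrictAnti fun x => g x * f x := fun _ _ hxy =>
  mul_lt_mul' (hg hxy.le) (hf hxy) (hf0 _) (hg0 _)

theorem existsUnique_nonneg_eq_of_strictAnti {f : ℝ → ℝ} (hf : StrictAnti f)
    (hfc : Continuous f) {L μ : ℝ} (hlim : Tendsto f atTop (𝓝 L)) (hLμ : L < μ)
    (hμ : μ ≤ f 0) : ∃! p, 0 ≤ p ∧ f p = μ := by
  obtain ⟨q, hq⟩ := eventually_atTop.1 (hlim.eventually (eventually_lt_nhds hLμ))
  have hq0 : (0 : ℝ) ≤ max q 0 := le_max_right _ _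
  obtain ⟨p, hp, hpμ⟩ := intermediate_value_Icc' hq0 hfc.continuousOn
    ⟨(hq _ (le_max_left _ _)).le, hμ⟩
  exact ⟨p, ⟨hp.1, hpμ⟩, fun y hy => hf.injective (hy.2.trans hpμ.symm)⟩

theorem strictAnti_exp_neg_mul {b γ : ℝ} (hb : 0 < b) (hγ : 0 < γ) :
    StrictAnti fun p : ℝ => Real.exp (-b * p * γ) := fun p q hpq =>
  Real.exp_lt_exp.2 (by nlinarith [mul_pos (mul_pos hb hγ) (sub_pos.2 hpq)])

theorem strictAnti_mul_exp_of_antitone {a b r γ : ℝ} {u : ℝ → ℝ} (ha : 0 < a) (hb : 0 < b)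
    (hr : 0 < r) (hγ : 0 < γ) (hu : Antitone u) (hu0 : ∀ x, 0 < u x) :
    StrictAnti fun p => a * b * r * u ((1 - a * Real.exp (-b * p * γ)) * r) * γ *
      Real.exp (-b * p * γ) := by
  have hexp := strictAnti_exp_neg_mul hb hγ
  have hfactor : Antitone fun p => u ((1 - a * Real.exp (-b * p * γ)) * r) :=
    fun p q hpq => hu <| mul_le_mul_of_nonneg_right
      (sub_le_sub_left (mul_le_mul_of_nonneg_left (hexp.antitone hpq) ha.le) 1) hr.le
  have hprod := hexp.mul_antitone_of_nonneg_of_pos hfactor (fun _ => (Real.exp_pos _).le)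
    (fun _ => hu0 _)
  have hK : 0 < a * b * r * γ := by positivity
  intro p q hpq
  convert mul_lt_mul_of_pos_left (hprod hpq) hK using 1 <;> ring

theorem stmt2_general (a b r γ : ℝ) (ha : 0 < a) (hb : 0 < b) (hr : 0 < r)
    (hγ : 0 < γ) (U : ℝ → ℝ)
    (hUdiff2 : Differentiable ℝ (deriv U))
    (hU' : ∀ x, 0 < deriv U x)
    (hU'' : ∀ x, deriv (deriv U) x ≤ 0)
    (φ : ℝ → ℝ)
    (hφ : ∀ p, φ p = a * b * r * deriv U ((1 - a * Real.exp (-b * p * γ)) * r) * γ *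
      Real.exp (-b * p * γ))
    (hlim : Filter.Tendsto φ Filter.atTop (nhds 0)) :
    (∀ μ, 0 < μ → μ ≤ φ 0 → ∃! p, 0 ≤ p ∧ φ p = μ) ∧
    (∀ μ, φ 0 < μ → ¬ ∃ p, 0 ≤ p ∧ φ p = μ) ∧
    (∀ Pf : ℝ → ℝ, (∀ μ ∈ Set.Ioc 0 (φ 0), 0 ≤ Pf μ ∧ φ (Pf μ) = μ) →
      StrictAntiOn Pf (Set.Ioc 0 (φ 0)) ∧ ContinuousOn Pf (Set.Ioc 0 (φ 0))) := by
  have hanti : StrictAnti φ := by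
    rw [funext hφ]
    exact strictAnti_mul_exp_of_antitone ha hb hr hγ (antitone_of_deriv_nonpos hUdiff2 hU'') hU'
  have hcont : Continuous φ := by
    have := hUdiff2.continuous
    rw [funext hφ]
    fun_prop
  refine ⟨fun μ hμ hμ0 => existsUnique_nonneg_eq_of_strictAnti hanti hcont hlim hμ hμ0, ?_,
    fun Pf hPf => ?_⟩
  · rintro μ hμ ⟨p, hp, rfl⟩
    exact (hanti.antitone hp).not_gt hμ
  · have hinv : RightInvOn Pf φ (Ioc 0 (φ 0)) := fun μ hμ => (hPf μ hμ).2
    exact ⟨hanti.strictAntiOn_of_rightInvOn hinv, hanti.continuousOn_of_rightInvOn hinv⟩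

/-- For every `0 < μ ≤ φ(0)` there is a unique `p ≥ 0` with `φ(p) = μ`; for `μ > φ(0)`
there is none; and any solution map `μ ↦ p(μ)` is continuous and strictly decreasing
on `(0, φ(0)]`. -/
theorem stmt2 (a b r γ : ℝ) (ha : 0 < a) (ha1 : a ≤ 1) (hb : 0 < b) (hr : 0 < r)
    (hγ : 0 < γ) (U : ℝ → ℝ) (hUdiff : Differentiable ℝ U)
    (hUdiff2 : Differentiable ℝ (deriv U))
    (hU' : ∀ x, 0 < deriv U x) (hU'cont : Continuous (deriv U))
    (hU'' : ∀ x, deriv (deriv U) x ≤ 0)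
    (φ : ℝ → ℝ)
    (hφ : ∀ p, φ p = a * b * r * deriv U ((1 - a * Real.exp (-b * p * γ)) * r) * γ *
      Real.exp (-b * p * γ))
    (hφ0 : φ 0 = a * b * r * deriv U ((1 - a) * r) * γ)
    (hlim : Filter.Tendsto φ Filter.atTop (nhds 0)) :
    (∀ μ, 0 < μ → μ ≤ φ 0 → ∃! p, 0 ≤ p ∧ φ p = μ) ∧
    (∀ μ, φ 0 < μ → ¬ ∃ p, 0 ≤ p ∧ φ p = μ) ∧
    (∀ Pf : ℝ → ℝ, (∀ μ ∈ Set.Ioc 0 (φ 0), 0 ≤ Pf μ ∧ φ (Pf μ) = μ) →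
      StrictAntiOn Pf (Set.Ioc 0 (φ 0)) ∧ ContinuousOn Pf (Set.Ioc 0 (φ 0))) :=
  stmt2_general a b r γ ha hb hr hγ U hUdiff2 hU' hU'' φ hφ hlim
end

section
/- Let L(μ, z) = F(z) + μ·(X(z) − P) with minimizers z*(μ) over Z, and suppose X(z*(μ̄)) ≤ P ≤ X(z*(μ_)). Define λ ∈ [0,1] by λ·X(z*(μ̄)) + (1−λ)·X(z*(μ_)) = P (taking λ = 0 if the two values coincide), and let Û = −(λ·F(z*(μ̄)) + (1−λ)·F(z*(μ_))) denote the utility of the interpolated solution. Let U* = −min over feasible z with X(z) ≤ P of F(z), and assume the strong-duality identity U* = −L(μ*, z*(μ*)) holds for some μ* ∈ [μ_, μ̄]. Then 0 ≤ U* − Û ≤ (μ̄ − μ_)·P. -/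
/-- Accuracy of the bisection CSRA algorithm: the utility `Û` of the interpolated
solution between the Lagrangian minimizers at `μ_` and `μ̄` is within `(μ̄ − μ_)·P`
of the optimal constrained utility `U*`. -/
theorem stmt4 {Z : Type*} (F X : Z → ℝ) (P : ℝ) (hP : 0 < P)
    (zstar : ℝ → Z) (μlo μhi μstar : ℝ) (hlo : μlo ≤ μstar) (hhi : μstar ≤ μhi)
    (hμlo : 0 ≤ μlo)
    (hmin : ∀ μ : ℝ, 0 ≤ μ → ∀ z : Z,
      F (zstar μ) + μ * (X (zstar μ) - P) ≤ F z + μ * (X z - P))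
    (hXnonneg : ∀ z, 0 ≤ X z)
    (hXhi : X (zstar μhi) ≤ P) (hXlo : P ≤ X (zstar μlo))
    (hdual : ∀ μ : ℝ, 0 ≤ μ →
      F (zstar μ) + μ * (X (zstar μ) - P) ≤
        F (zstar μstar) + μstar * (X (zstar μstar) - P))
    (lam : ℝ) (hlam0 : 0 ≤ lam) (hlam1 : lam ≤ 1)
    (hconv : lam * X (zstar μhi) + (1 - lam) * X (zstar μlo) = P)
    (Uhat Ustar : ℝ)
    (hUhat : Uhat = -(lam * F (zstar μhi) + (1 - lam) * F (zstar μlo)))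
    -- `U*` is the optimal value of the constrained problem
    (hUstar_ub : ∀ z, X z ≤ P → -F z ≤ Ustar)
    -- the interpolated solution is feasible for the (convex) constrained problem
    (hinterp : ∃ z, X z ≤ P ∧ Uhat ≤ -F z)
    -- strong duality
    (hSD : Ustar = -(F (zstar μstar) + μstar * (X (zstar μstar) - P))) :
    0 ≤ Ustar - Uhat ∧ Ustar - Uhat ≤ (μhi - μlo) * P := by
  obtain ⟨z, hz, hUz⟩ := hinterp
  constructor
  · linarith [hUstar_ub z hz]
  · have hμhi : (0:ℝ) ≤ μhi := le_trans hμlo (le_trans hlo hhi)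
    have h1 := hdual μlo hμlo
    have h2 := hdual μhi hμhi
    have hS1 : F (zstar μlo) + μlo * (X (zstar μlo) - P) ≤ -Ustar := by
      rw [hSD]; linarith
    have hS2 : F (zstar μhi) + μhi * (X (zstar μhi) - P) ≤ -Ustar := by
      rw [hSD]; linarith
    have hAn := hXnonneg (zstar μhi)
    nlinarith [hS1, hS2, hconv, hXhi, hXlo,
      mul_le_mul_of_nonneg_left hS2 hlam0,
      mul_le_mul_of_nonneg_left hS1 (by linarith : (0:ℝ) ≤ 1 - lam),
      mul_nonneg (by linarith : (0:ℝ) ≤ μhi - μlo) (mul_nonneg hlam0 hAn),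
      mul_nonneg (by linarith : (0:ℝ) ≤ μhi - μlo) (mul_nonneg (by linarith : (0:ℝ) ≤ 1 - lam) hP.le)]
end

section
/- With μ_min = min over (n,k,m) of a·b·r·E[U'((1−a·e^{−b·P·γ})r)·γ·e^{−b·P·γ}] and μ_max = max over (n,k,m) of a·b·r·U'((1−a)r)·E[γ] (with per-(k,m) constants a ∈ (0,1], b, r > 0 and nonnegative random SNRs γ with finite positive mean), one has 0 < μ_min ≤ μ_max; and for any μ > μ_max the optimal power allocation p*(μ) defined by the water-filling condition is identically zero for every (n,k,m). -/
/-!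
Write `q(p) = a b r E[U'((1 - a e^{-b p γ}) r) γ e^{-b p γ}]`. For `p ≥ 0` the factor
`e = e^{-b p γ}` is at most `1`, so the argument of `U'` is at least `(1 - a) r`; as `U'` is
antitone and positive, `U'(…) γ e ≤ U'((1 - a) r) γ`, hence `q(p) ≤ a b r U'((1 - a) r) E[γ]`,
which is at most `μ_max`. So no `μ > μ_max` solves `μ = q(p)`, and `μ_min`, attained at some
index, is at most `μ_max`. It is positive because the integrand is positive exactly where `γ` is,
and `E[γ] > 0` forces `{γ > 0}` to have positive measure.
-/

open MeasureTheory Real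

section WaterFilling

variable {Ω : Type*} [MeasurableSpace Ω] (Pr : Measure Ω) (U : ℝ → ℝ) (a b r : ℝ) (γ : Ω → ℝ)

/-- The right-hand side of the water-filling condition at power `p`. -/
noncomputable def marginalUtility (p : ℝ) : ℝ :=
  a * b * r * ∫ ω, deriv U ((1 - a * exp (-b * p * γ ω)) * r) * γ ω * exp (-b * p * γ ω) ∂Pr

variable {Pr U a b r γ}

/-- `deriv U x ≠ 0` already forces `U` to be differentiable at `x`. -/
theorem ConcaveOn.antitone_deriv_of_deriv_pos (hU : ConcaveOn ℝ Set.univ U)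
    (hU' : ∀ x, 0 < deriv U x) : Antitone (deriv U) := fun x y hxy =>
  hU.antitoneOn_deriv (fun z _ => differentiableAt_of_deriv_ne_zero (hU' z).ne')
    (Set.mem_univ x) (Set.mem_univ y) hxy

theorem deriv_mul_mul_le_of_antitone (hanti : Antitone (deriv U)) (hU' : ∀ x, 0 ≤ deriv U x)
    (ha : 0 ≤ a) (hr : 0 ≤ r) {g e : ℝ} (hg : 0 ≤ g) (he1 : e ≤ 1) :
    deriv U ((1 - a * e) * r) * g * e ≤ deriv U ((1 - a) * r) * g := by
  have harg : (1 - a) * r ≤ (1 - a * e) * r := by gcongr; nlinarith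
  calc deriv U ((1 - a * e) * r) * g * e
      ≤ deriv U ((1 - a * e) * r) * g := mul_le_of_le_one_right (mul_nonneg (hU' _) hg) he1
    _ ≤ deriv U ((1 - a) * r) * g := mul_le_mul_of_nonneg_right (hanti harg) hg

theorem marginalUtility_le (hU : ConcaveOn ℝ Set.univ U) (hU' : ∀ x, 0 < deriv U x)
    (ha : 0 ≤ a) (hb : 0 ≤ b) (hr : 0 ≤ r) (hγ0 : ∀ ω, 0 ≤ γ ω) (hγint : Integrable γ Pr)
    {p : ℝ} (hp : 0 ≤ p)
    (hint : Integrable (fun ω =>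
      deriv U ((1 - a * exp (-b * p * γ ω)) * r) * γ ω * exp (-b * p * γ ω)) Pr) :
    marginalUtility Pr U a b r γ p ≤ a * b * r * deriv U ((1 - a) * r) * ∫ ω, γ ω ∂Pr := by
  have hpt : ∀ ω, deriv U ((1 - a * exp (-b * p * γ ω)) * r) * γ ω * exp (-b * p * γ ω) ≤
      deriv U ((1 - a) * r) * γ ω := fun ω =>
    deriv_mul_mul_le_of_antitone (hU.antitone_deriv_of_deriv_pos hU') (fun x => (hU' x).le)
      ha hr (hγ0 ω) (exp_le_one_iff.mpr (by nlinarith [mul_nonneg (mul_nonneg hb hp) (hγ0 ω)]))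
  calc marginalUtility Pr U a b r γ p
      ≤ a * b * r * ∫ ω, deriv U ((1 - a) * r) * γ ω ∂Pr :=
        mul_le_mul_of_nonneg_left (integral_mono hint (hγint.const_mul _) hpt) (by positivity)
    _ = a * b * r * deriv U ((1 - a) * r) * ∫ ω, γ ω ∂Pr := by
      rw [integral_const_mul]; ring

theorem marginalUtility_pos (hU' : ∀ x, 0 < deriv U x) (ha : 0 < a) (hb : 0 < b) (hr : 0 < r)
    (hγ0 : ∀ ω, 0 ≤ γ ω) (hγint : Integrable γ Pr) (hγpos : 0 < ∫ ω, γ ω ∂Pr) (p : ℝ)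
    (hint : Integrable (fun ω =>
      deriv U ((1 - a * exp (-b * p * γ ω)) * r) * γ ω * exp (-b * p * γ ω)) Pr) :
    0 < marginalUtility Pr U a b r γ p := by
  have hnn : 0 ≤ fun ω => deriv U ((1 - a * exp (-b * p * γ ω)) * r) * γ ω * exp (-b * p * γ ω) :=
    fun ω => mul_nonneg (mul_nonneg (hU' _).le (hγ0 ω)) (exp_pos _).le
  have hsupp : (Function.support fun ω =>
      deriv U ((1 - a * exp (-b * p * γ ω)) * r) * γ ω * exp (-b * p * γ ω)) =
      Function.support γ := by
    ext ω
    simp [(hU' _).ne', (exp_pos _).ne']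
  rw [integral_pos_iff_support_of_nonneg hγ0 hγint] at hγpos
  refine mul_pos (by positivity) ?_
  rwa [integral_pos_iff_support_of_nonneg hnn hint, hsupp]

end WaterFilling

theorem stmt15_general {Ω ι : Type*} [Fintype ι] [Nonempty ι] [MeasurableSpace Ω]
    (Pr : Measure Ω)
    (a b r : ι → ℝ) (ha : ∀ i, 0 < a i)
    (hb : ∀ i, 0 < b i) (hr : ∀ i, 0 < r i)
    (U : ι → ℝ → ℝ)
    (hU' : ∀ i (x : ℝ), 0 < deriv (U i) x)
    (hUconc : ∀ i, ConcaveOn ℝ Set.univ (U i))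
    (γ : ι → Ω → ℝ) (hγ0 : ∀ i ω, 0 ≤ γ i ω)
    (hγint : ∀ i, Integrable (γ i) Pr)
    (hγpos : ∀ i, 0 < ∫ ω, γ i ω ∂Pr)
    (Pcon : ℝ) (hP : 0 < Pcon)
    (hint : ∀ i (p : ℝ), Integrable (fun ω =>
      deriv (U i) ((1 - a i * Real.exp (-b i * p * γ i ω)) * r i) * γ i ω *
        Real.exp (-b i * p * γ i ω)) Pr)
    (μmin μmax : ℝ)
    (hμmin : μmin = ⨅ i, a i * b i * r i * ∫ ω,
      deriv (U i) ((1 - a i * Real.exp (-b i * Pcon * γ i ω)) * r i) * γ i ω *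
        Real.exp (-b i * Pcon * γ i ω) ∂Pr)
    (hμmax : μmax = ⨆ i, a i * b i * r i * deriv (U i) ((1 - a i) * r i) *
      ∫ ω, γ i ω ∂Pr) :
    0 < μmin ∧ μmin ≤ μmax ∧
    ∀ μ : ℝ, μmax < μ → ∀ i, ∀ p : ℝ, 0 ≤ p →
      μ ≠ a i * b i * r i * ∫ ω,
        deriv (U i) ((1 - a i * Real.exp (-b i * p * γ i ω)) * r i) * γ i ω *
          Real.exp (-b i * p * γ i ω) ∂Pr := by
  let q : ι → ℝ → ℝ := fun i => marginalUtility Pr (U i) (a i) (b i) (r i) (γ i)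
  have hterm_le : ∀ i, a i * b i * r i * deriv (U i) ((1 - a i) * r i) * ∫ ω, γ i ω ∂Pr ≤ μmax :=
    fun i => hμmax ▸ Finite.le_ciSup_of_le i le_rfl
  have hq_le : ∀ i p, 0 ≤ p → q i p ≤ μmax := fun i p hp =>
    (marginalUtility_le (hUconc i) (hU' i) (ha i).le (hb i).le (hr i).le (hγ0 i) (hγint i) hp
      (hint i p)).trans (hterm_le i)
  obtain ⟨j, hj⟩ := exists_eq_ciInf_of_finite (f := fun i => q i Pcon)
  have hμmin_eq : μmin = q j Pcon := hμmin.trans hj.symm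
  refine ⟨hμmin_eq ▸ marginalUtility_pos (hU' j) (ha j) (hb j) (hr j) (hγ0 j) (hγint j)
      (hγpos j) Pcon (hint j Pcon), hμmin_eq ▸ hq_le j Pcon hP.le, ?_⟩
  intro μ hμ i p hp
  exact ((hq_le i p hp).trans_lt hμ).ne'

/-- Bounds on the optimal dual variable: `0 < μ_min ≤ μ_max`, and for `μ > μ_max`
the water-filling condition has no solution with `p ≥ 0`, so the optimal power
allocation is identically zero. -/
theorem stmt15 {Ω ι : Type*} [Fintype ι] [Nonempty ι] [MeasurableSpace Ω]
    (Pr : Measure Ω) [IsProbabilityMeasure Pr]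
    (a b r : ι → ℝ) (ha : ∀ i, 0 < a i) (ha1 : ∀ i, a i ≤ 1)
    (hb : ∀ i, 0 < b i) (hr : ∀ i, 0 < r i)
    (U : ι → ℝ → ℝ) (hUdiff : ∀ i, Differentiable ℝ (U i))
    (hU' : ∀ i (x : ℝ), 0 < deriv (U i) x)
    (hUconc : ∀ i, ConcaveOn ℝ Set.univ (U i))
    (γ : ι → Ω → ℝ) (hγ0 : ∀ i ω, 0 ≤ γ i ω)
    (hγint : ∀ i, Integrable (γ i) Pr)
    (hγpos : ∀ i, 0 < ∫ ω, γ i ω ∂Pr)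
    (Pcon : ℝ) (hP : 0 < Pcon)
    (hint : ∀ i (p : ℝ), Integrable (fun ω =>
      deriv (U i) ((1 - a i * Real.exp (-b i * p * γ i ω)) * r i) * γ i ω *
        Real.exp (-b i * p * γ i ω)) Pr)
    (μmin μmax : ℝ)
    (hμmin : μmin = ⨅ i, a i * b i * r i * ∫ ω,
      deriv (U i) ((1 - a i * Real.exp (-b i * Pcon * γ i ω)) * r i) * γ i ω *
        Real.exp (-b i * Pcon * γ i ω) ∂Pr)
    (hμmax : μmax = ⨆ i, a i * b i * r i * deriv (U i) ((1 - a i) * r i) *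
      ∫ ω, γ i ω ∂Pr) :
    0 < μmin ∧ μmin ≤ μmax ∧
    ∀ μ : ℝ, μmax < μ → ∀ i, ∀ p : ℝ, 0 ≤ p →
      μ ≠ a i * b i * r i * ∫ ω,
        deriv (U i) ((1 - a i * Real.exp (-b i * p * γ i ω)) * r i) * γ i ω *
          Real.exp (-b i * p * γ i ω) ∂Pr :=
  stmt15_general Pr a b r ha hb hr U hU' hUconc γ hγ0 hγint hγpos Pcon hP hint μmin μmax hμmin hμmax
end
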